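/- arXiv:2603.26214 — 10 statements merged into one kernel-verified Lean document; each statement's English description precedes it below -/
import Mathlib

section
/- For every finite simple graph G, the chromatic number of G is at most its b-chromatic number, which in turn is at most its m-degree m(G). -/
open SimpleGraph

/-- A proper colouring of `G` given as a function to `ℕ`. -/
def IsProperColoring {V : Type*} (G : SimpleGraph V) (c : V → ℕ) : Prop :=
  ∀ u v, G.Adj u v → c u ≠ c v

/-- A vertex `v` is b-chromatic under `c`: it has a neighbour of every used colour
other than its own. -/
def IsBVertex {V : Type*} (G : SimpleGraph V) (c : V → ℕ) (v : V) : Prop :=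
  ∀ j ∈ Set.range c, j ≠ c v → ∃ u, G.Adj v u ∧ c u = j

/-- A b-colouring: a proper colouring in which every colour class contains a
b-chromatic vertex. -/
def IsBColoring {V : Type*} (G : SimpleGraph V) (c : V → ℕ) : Prop :=
  IsProperColoring G c ∧ ∀ j ∈ Set.range c, ∃ v, c v = j ∧ IsBVertex G c v

/-- The number of colours used by a colouring. -/
noncomputable def numColors {V : Type*} (c : V → ℕ) : ℕ := (Set.range c).ncard

/-- The b-chromatic number: the maximum number of colours in a b-colouring. -/
noncomputable def bChromaticNumber {V : Type*} (G : SimpleGraph V) : ℕ :=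
  sSup {k | ∃ c, IsBColoring G c ∧ numColors c = k}

/-- The m-degree `m(G)`: the largest `k` such that `G` has at least `k` vertices of
degree at least `k - 1`. -/
noncomputable def mDegree {V : Type*} (G : SimpleGraph V) : ℕ :=
  sSup {k | k ≤ {v : V | k ≤ (G.neighborSet v).ncard + 1}.ncard}

/-- The set of dense vertices: those of degree at least `m(G) - 1`. -/
def denseSet {V : Type*} (G : SimpleGraph V) : Set V :=
  {v | mDegree G ≤ (G.neighborSet v).ncard + 1}

/-- A graph is tight if it has exactly `m(G)` dense vertices, each of degree
exactly `m(G) - 1`. -/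
def IsTight {V : Type*} (G : SimpleGraph V) : Prop :=
  (denseSet G).ncard = mDegree G ∧
    ∀ v ∈ denseSet G, (G.neighborSet v).ncard = mDegree G - 1

/-- A fall colouring: a proper colouring in which every vertex has a neighbour of
every used colour other than its own. -/
def IsFallColoring {V : Type*} (G : SimpleGraph V) (c : V → ℕ) : Prop :=
  IsProperColoring G c ∧ ∀ v, ∀ j ∈ Set.range c, j ≠ c v → ∃ u, G.Adj v u ∧ c u = j

/-- The fall spectrum: the set of numbers of colours of fall colourings of `G`. -/
def fallSpectrum {V : Type*} (G : SimpleGraph V) : Set ℕ :=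
  {k | ∃ c, IsFallColoring G c ∧ numColors c = k}

/-- The outer boundary of a vertex set: vertices outside it with a neighbour in it. -/
def outerBoundary {V : Type*} (G : SimpleGraph V) (T : Set V) : Set V :=
  {s | s ∉ T ∧ ∃ t ∈ T, G.Adj s t}

/-! In a b-colouring with `k` colours, the b-chromatic vertices of the `k` classes are distinct
and each sees the other `k - 1` colours among its neighbours, so `φ(G) ≤ m(G)`. A proper colouring
with the fewest colours is a b-colouring, so `χ(G) ≤ φ(G)`: if some colour class had no
b-chromatic vertex, each of its vertices could be moved to a colour missing from its
neighbourhood, and the class would disappear. -/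

namespace SimpleGraph

variable {V : Type*} {G : SimpleGraph V} {c : V → ℕ}

theorem isProperColoring_of_injective (hc : c.Injective) : IsProperColoring G c :=
  fun _ _ hadj heq => G.ne_of_adj hadj (hc heq)

theorem IsProperColoring.colorable [Finite V] (hc : IsProperColoring G c) :
    G.Colorable (numColors c) := by
  let C : G.Coloring (Set.range c) :=
    Coloring.mk (Set.rangeFactorization c) fun hadj heq => hc _ _ hadj (congrArg Subtype.val heq)
  have := Fintype.ofFinite (Set.range c)
  rw [numColors, ← Nat.card_coe_set_eq, Nat.card_eq_fintype_card]
  exact C.colorable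

theorem IsBVertex.numColors_le [Finite V] {v : V} (hv : IsBVertex G c v) :
    numColors c ≤ (G.neighborSet v).ncard + 1 := by
  have hsub : Set.range c \ {c v} ⊆ c '' G.neighborSet v := by
    rintro j ⟨hj, hjv⟩
    obtain ⟨u, hadj, rfl⟩ := hv j hj hjv
    exact ⟨u, hadj, rfl⟩
  have := (Set.ncard_le_ncard hsub (Set.toFinite _)).trans (Set.ncard_image_le (f := c) (Set.toFinite _))
  rw [Set.ncard_sdiff_singleton_of_mem (Set.mem_range_self v)] at this
  unfold numColors
  omega

theorem le_mDegree [Finite V] {k : ℕ}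
    (hk : k ≤ {v : V | k ≤ (G.neighborSet v).ncard + 1}.ncard) : k ≤ mDegree G :=
  le_csSup ⟨Nat.card V, fun _ hn => hn.trans (Set.ncard_le_card _)⟩ hk

theorem IsBColoring.numColors_le_mDegree [Finite V] (hc : IsBColoring G c) :
    numColors c ≤ mDegree G := by
  refine le_mDegree ((Set.ncard_le_ncard ?_ (Set.toFinite _)).trans
    (Set.ncard_image_le (f := c) (Set.toFinite _)))
  rintro j hj
  obtain ⟨v, rfl, hv⟩ := hc.2 j hj
  exact ⟨v, hv.numColors_le, rfl⟩

theorem bChromaticNumber_le_mDegree [Finite V] : bChromaticNumber G ≤ mDegree G :=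
  csSup_le' fun _ ⟨_, hc, hk⟩ => hk ▸ hc.numColors_le_mDegree

theorem IsBColoring.numColors_le_bChromaticNumber [Finite V] (hc : IsBColoring G c) :
    numColors c ≤ bChromaticNumber G :=
  le_csSup ⟨mDegree G, fun _ ⟨_, hc', hk⟩ => hk ▸ hc'.numColors_le_mDegree⟩ ⟨c, hc, rfl⟩

theorem IsProperColoring.exists_numColors_lt [Finite V] (hc : IsProperColoring G c)
    (hb : ¬IsBColoring G c) : ∃ c', IsProperColoring G c' ∧ numColors c' < numColors c := by
  obtain ⟨j, hj, hnoB⟩ : ∃ j ∈ Set.range c, ∀ v, c v = j → ¬IsBVertex G c v := by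
    simpa [IsBColoring, hc] using hb
  have hmissing : ∀ v, c v = j →
      ∃ j' ∈ Set.range c, j' ≠ j ∧ ∀ u, G.Adj v u → c u ≠ j' := by
    intro v hv
    simpa [IsBVertex, hv] using hnoB v hv
  choose! f hf_mem hf_ne hf_missing using hmissing
  let c' : V → ℕ := fun v => if c v = j then f v else c v
  refine ⟨c', ?_, ?_⟩
  · intro u v hadj
    by_cases hu : c u = j <;> by_cases hv : c v = j <;> simp only [c', hu, hv, if_true, if_false]
    · exact absurd (hu.trans hv.symm) (hc u v hadj)
    · exact (hf_missing u hu v hadj).symm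
    · exact hf_missing v hv u hadj.symm
    · exact hc u v hadj
  · have hsub : Set.range c' ⊆ Set.range c \ {j} := by
      rintro _ ⟨v, rfl⟩
      by_cases hv : c v = j
      · simpa [c', hv] using ⟨hf_mem v hv, hf_ne v hv⟩
      · simp [c', hv]
    exact (Set.ncard_le_ncard hsub (Set.toFinite _)).trans_lt
      (Set.ncard_sdiff_singleton_lt_of_mem hj (Set.toFinite _))

theorem IsProperColoring.exists_isBColoring [Finite V] (hc : IsProperColoring G c) :
    ∃ c', IsBColoring G c' ∧ numColors c' ≤ numColors c := by
  induction h : numColors c using Nat.strong_induction_on generalizing c with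
  | _ n ih =>
    by_cases hb : IsBColoring G c
    · exact ⟨c, hb, h.le⟩
    obtain ⟨c', hc', hlt⟩ := hc.exists_numColors_lt hb
    obtain ⟨c'', hb'', hle⟩ := ih _ (h ▸ hlt) hc' rfl
    exact ⟨c'', hb'', hle.trans (h ▸ hlt).le⟩

end SimpleGraph

theorem stmt0 {V : Type*} [Fintype V] (G : SimpleGraph V) :
    G.chromaticNumber ≤ (bChromaticNumber G : ℕ∞) ∧ bChromaticNumber G ≤ mDegree G := by
  obtain ⟨f, hf⟩ := exists_injective_nat V
  obtain ⟨c, hc, -⟩ := (isProperColoring_of_injective (G := G) hf).exists_isBColoring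
  refine ⟨?_, bChromaticNumber_le_mDegree⟩
  calc G.chromaticNumber ≤ numColors c := hc.1.colorable.chromaticNumber_le
    _ ≤ bChromaticNumber G := by exact_mod_cast hc.numColors_le_bChromaticNumber
end

section
/- If a finite simple graph G admits a fall colouring, then χ(G) ≤ χ_f(G) ≤ φ_f(G) ≤ δ(G)+1, where δ(G) is the minimum degree of G. -/
open SimpleGraph

section

variable {V : Type*} {G : SimpleGraph V} {c : V → ℕ}

theorem IsProperColoring.colorable_numColors [Finite V] (hc : IsProperColoring G c) :
    G.Colorable (numColors c) := by
  have := Fintype.ofFinite (Set.range c)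
  rw [numColors, ← Nat.card_coe_set_eq, Nat.card_eq_fintype_card]
  exact (Coloring.mk (fun v => ⟨c v, Set.mem_range_self v⟩)
    fun huv h => hc _ _ huv (congrArg Subtype.val h)).colorable

theorem IsFallColoring.numColors_le_ncard_neighborSet_add_one (hc : IsFallColoring G c) (v : V)
    (hv : (G.neighborSet v).Finite) : numColors c ≤ (G.neighborSet v).ncard + 1 := by
  have hsub : Set.range c ⊆ insert (c v) (c '' G.neighborSet v) := by
    rintro _ ⟨w, rfl⟩
    by_cases hw : c w = c v
    · exact Or.inl hw
    · obtain ⟨u, hvu, hu⟩ := hc.2 v (c w) ⟨w, rfl⟩ hw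
      exact Or.inr ⟨u, hvu, hu⟩
  calc numColors c ≤ (insert (c v) (c '' G.neighborSet v)).ncard :=
        Set.ncard_le_ncard hsub ((hv.image c).insert (c v))
    _ ≤ (c '' G.neighborSet v).ncard + 1 := Set.ncard_insert_le _ _
    _ ≤ (G.neighborSet v).ncard + 1 := by gcongr; exact Set.ncard_image_le hv

theorem le_ncard_neighborSet_add_one_of_mem_fallSpectrum [Finite V] {k : ℕ}
    (hk : k ∈ fallSpectrum G) (v : V) : k ≤ (G.neighborSet v).ncard + 1 := by
  obtain ⟨c, hc, rfl⟩ := hk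
  exact hc.numColors_le_ncard_neighborSet_add_one v (Set.toFinite _)

theorem chromaticNumber_le_of_mem_fallSpectrum [Finite V] {k : ℕ} (hk : k ∈ fallSpectrum G) :
    G.chromaticNumber ≤ k := by
  obtain ⟨c, hc, rfl⟩ := hk
  exact hc.1.colorable_numColors.chromaticNumber_le

theorem bddAbove_fallSpectrum [Finite V] [Nonempty V] : BddAbove (fallSpectrum G) :=
  let v : V := Classical.arbitrary V
  ⟨(G.neighborSet v).ncard + 1, fun _ hk => le_ncard_neighborSet_add_one_of_mem_fallSpectrum hk v⟩

end

theorem stmt2 {V : Type*} [Fintype V] [Nonempty V] (G : SimpleGraph V)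
    (h : (fallSpectrum G).Nonempty) :
    G.chromaticNumber ≤ ((sInf (fallSpectrum G) : ℕ) : ℕ∞) ∧
    sInf (fallSpectrum G) ≤ sSup (fallSpectrum G) ∧
    sSup (fallSpectrum G) ≤ sInf {k | ∃ v : V, (G.neighborSet v).ncard = k} + 1 := by
  refine ⟨chromaticNumber_le_of_mem_fallSpectrum (Nat.sInf_mem h),
    csInf_le_csSup h (OrderBot.bddBelow _) bddAbove_fallSpectrum, csSup_le h fun k hk => ?_⟩
  obtain ⟨v, hv⟩ : sInf {k | ∃ v : V, (G.neighborSet v).ncard = k} ∈ _ :=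
    Nat.sInf_mem ⟨_, Classical.arbitrary V, rfl⟩
  exact hv ▸ le_ncard_neighborSet_add_one_of_mem_fallSpectrum hk v
end

section
/- A graph is paw-free if and only if each of its connected components is triangle-free or complete multipartite. -/
open SimpleGraph

/-- The paw: a triangle on `0,1,2` with the pendant vertex `3` attached to `0`. -/
def pawGraph : SimpleGraph (Fin 4) :=
  SimpleGraph.fromRel (fun a b =>
    (a = 0 ∧ b = 1) ∨ (a = 1 ∧ b = 2) ∨ (a = 2 ∧ b = 0) ∨ (a = 0 ∧ b = 3))

/-- `G` has no induced subgraph isomorphic to `H`. -/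
def IndSubgraphFree {W V : Type*} (H : SimpleGraph W) (G : SimpleGraph V) : Prop :=
  ∀ s : Set V, ¬ Nonempty (G.induce s ≃g H)

/-- A graph is complete multipartite: vertices can be partitioned into parts so
that two vertices are adjacent iff they lie in different parts. -/
def IsCompleteMultipartiteGraph {W : Type*} (H : SimpleGraph W) : Prop :=
  ∃ (ι : Type) (p : W → ι), ∀ u v, H.Adj u v ↔ p u ≠ p v

instance : DecidableRel pawGraph.Adj := fun a b =>
  decidable_of_iff' _ (SimpleGraph.fromRel_adj _ a b)

lemma paw_of {V : Type} {G : SimpleGraph V} (hpf : IndSubgraphFree pawGraph G)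
    {a b c d : V} (hab : G.Adj a b) (hbc : G.Adj b c) (hca : G.Adj c a)
    (hda : G.Adj d a) (hdb : ¬ G.Adj d b) (hdc : ¬ G.Adj d c) : False := by
  have e01 : pawGraph.Adj 0 1 := by decide
  have e12 : pawGraph.Adj 1 2 := by decide
  have e20 : pawGraph.Adj 2 0 := by decide
  have e03 : pawGraph.Adj 0 3 := by decide
  have nii : ∀ i : Fin 4, ¬ pawGraph.Adj i i := by decide
  have n13 : ¬ pawGraph.Adj 1 3 := by decide
  have n23 : ¬ pawGraph.Adj 2 3 := by decide
  classical
  have hab' : a ≠ b := hab.ne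
  have hbc' : b ≠ c := hbc.ne
  have hca' : c ≠ a := hca.ne
  have hda' : d ≠ a := hda.ne
  have hdb' : d ≠ b := fun h => hdc (h ▸ hbc)
  have hdc' : d ≠ c := fun h => hdb (h ▸ hbc.symm)
  set s : Set V := {a, b, c, d} with hs
  have ha : a ∈ s := by simp [hs]
  have hb : b ∈ s := by simp [hs]
  have hc : c ∈ s := by simp [hs]
  have hd : d ∈ s := by simp [hs]
  refine hpf s ⟨RelIso.symm ⟨⟨![⟨a, ha⟩, ⟨b, hb⟩, ⟨c, hc⟩, ⟨d, hd⟩],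
      fun x => if x.1 = a then 0 else if x.1 = b then 1 else if x.1 = c then 2 else 3,
      ?_, ?_⟩, ?_⟩⟩
  · intro i
    fin_cases i <;>
      simp [hab', hbc', hca', hda', hdb', hdc', hab'.symm, hbc'.symm, hca'.symm,
        hda'.symm, hdb'.symm, hdc'.symm]
  · rintro ⟨v, hv⟩
    simp only [hs, Set.mem_insert_iff, Set.mem_singleton_iff] at hv
    rcases hv with rfl | rfl | rfl | rfl <;>
      simp [hab', hbc', hca', hda', hdb', hdc', hab'.symm, hbc'.symm, hca'.symm,
        hda'.symm, hdb'.symm, hdc'.symm]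
  · intro i j
    fin_cases i <;> fin_cases j
    · exact iff_of_false (G.irrefl) (nii 0)
    · exact iff_of_true hab e01
    · exact iff_of_true hca.symm e20.symm
    · exact iff_of_true hda.symm e03
    · exact iff_of_true hab.symm e01.symm
    · exact iff_of_false (G.irrefl) (nii 1)
    · exact iff_of_true hbc e12
    · exact iff_of_false (fun h => hdb h.symm) n13
    · exact iff_of_true hca e20
    · exact iff_of_true hbc.symm e12.symm
    · exact iff_of_false (G.irrefl) (nii 2)
    · exact iff_of_false (fun h => hdc h.symm) n23
    · exact iff_of_true hda e03.symm
    · exact iff_of_false hdb (fun h => n13 h.symm)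
    · exact iff_of_false hdc (fun h => n23 h.symm)
    · exact iff_of_false (G.irrefl) (nii 3)

lemma adj_of_triangle {V : Type} {G : SimpleGraph V} {p q r i j : V}
    (hpq : G.Adj p q) (hqr : G.Adj q r) (hpr : G.Adj p r) (hij : i ≠ j)
    (hi : i = p ∨ i = q ∨ i = r) (hj : j = p ∨ j = q ∨ j = r) : G.Adj i j := by
  rcases hi with rfl | rfl | rfl <;> rcases hj with rfl | rfl | rfl <;>
    first
      | exact absurd rfl hij
      | assumption
      | exact hpq.symm
      | exact hqr.symm
      | exact hpr.symm

lemma adj_two {V : Type} {G : SimpleGraph V} (hpf : IndSubgraphFree pawGraph G)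
    {p q r v : V} (hpq : G.Adj p q) (hqr : G.Adj q r) (hpr : G.Adj p r)
    (hvp : G.Adj v p) : G.Adj v q ∨ G.Adj v r := by
  by_contra h
  push_neg at h
  exact paw_of hpf hpq hqr hpr.symm hvp h.1 h.2

def AdjTwo {V : Type} (G : SimpleGraph V) (p q r v : V) : Prop :=
  ∃ i j, i ≠ j ∧ (i = p ∨ i = q ∨ i = r) ∧ (j = p ∨ j = q ∨ j = r) ∧ G.Adj v i ∧ G.Adj v j

lemma adjTwo_of_adj_one {V : Type} {G : SimpleGraph V} (hpf : IndSubgraphFree pawGraph G)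
    {p q r v m : V} (hpq : G.Adj p q) (hqr : G.Adj q r) (hpr : G.Adj p r)
    (hm : m = p ∨ m = q ∨ m = r) (hvm : G.Adj v m) : AdjTwo G p q r v := by
  rcases hm with rfl | rfl | rfl
  · rcases adj_two hpf hpq hqr hpr hvm with h | h
    · exact ⟨m, q, hpq.ne, Or.inl rfl, Or.inr (Or.inl rfl), hvm, h⟩
    · exact ⟨m, r, hpr.ne, Or.inl rfl, Or.inr (Or.inr rfl), hvm, h⟩
  · rcases adj_two hpf hqr hpr.symm hpq.symm hvm with h | h
    · exact ⟨m, r, hqr.ne, Or.inr (Or.inl rfl), Or.inr (Or.inr rfl), hvm, h⟩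
    · exact ⟨m, p, fun e => hpq.ne e.symm, Or.inr (Or.inl rfl), Or.inl rfl, hvm, h⟩
  · rcases adj_two hpf hpr.symm hpq hqr.symm hvm with h | h
    · exact ⟨m, p, fun e => hpr.ne e.symm, Or.inr (Or.inr rfl), Or.inl rfl, hvm, h⟩
    · exact ⟨m, q, fun e => hqr.ne e.symm, Or.inr (Or.inr rfl), Or.inr (Or.inl rfl), hvm, h⟩

lemma walk_trans {V : Type} {G : SimpleGraph V} {P : V → Prop}
    (hstep : ∀ a b, G.Adj a b → P b → P a) : ∀ {u v : V}, G.Walk u v → P v → P u := by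
  intro u v w
  induction w with
  | nil => exact id
  | cons h _ ih => exact fun hv => hstep _ _ h (ih hv)

lemma claim1 {V : Type} {G : SimpleGraph V} (hpf : IndSubgraphFree pawGraph G)
    {p q r : V} (hpq : G.Adj p q) (hqr : G.Adj q r) (hpr : G.Adj p r) :
    ∀ v, G.Reachable v p → (v = p ∨ v = q ∨ v = r) ∨ AdjTwo G p q r v := by
  intro v hreach
  obtain ⟨w⟩ := hreach
  refine walk_trans (P := fun x => (x = p ∨ x = q ∨ x = r) ∨ AdjTwo G p q r x) ?_ w (Or.inl (Or.inl rfl))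
  intro a b h ih
  rcases ih with hm | ⟨i, j, hij, hi, hj, hui, huj⟩
  · exact Or.inr (adjTwo_of_adj_one hpf hpq hqr hpr hm h)
  · have hij' : G.Adj i j := adj_of_triangle hpq hqr hpr hij hi hj
    rcases adj_two hpf hui hij' huj h with hvi | hvj
    · exact Or.inr (adjTwo_of_adj_one hpf hpq hqr hpr hi hvi)
    · exact Or.inr (adjTwo_of_adj_one hpf hpq hqr hpr hj hvj)

lemma key_trans {V : Type} {G : SimpleGraph V} (hpf : IndSubgraphFree pawGraph G)
    {x y z : V} (hxy : G.Adj x y) (hyz : G.Adj y z) (hxz : G.Adj x z)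
    {a b c : V} (hra : G.Reachable a x) (hrb : G.Reachable b x)
    (hab : ¬ G.Adj a b) (hbc : ¬ G.Adj b c) (hac : G.Adj a c) : False := by
  obtain ⟨x', y', hbx', hby', hx'y'⟩ :
      ∃ x' y', G.Adj b x' ∧ G.Adj b y' ∧ G.Adj x' y' := by
    rcases claim1 hpf hxy hyz hxz b hrb with (rfl | rfl | rfl) | ⟨i, j, hij, hi, hj, hbi, hbj⟩
    · exact ⟨y, z, hxy, hxz, hyz⟩
    · exact ⟨x, z, hxy.symm, hyz, hxz⟩
    · exact ⟨x, y, hxz.symm, hyz.symm, hxy⟩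
    · exact ⟨i, j, hbi, hbj, adj_of_triangle hxy hyz hxz hij hi hj⟩
  have getx : ∀ w, ¬ G.Adj w b → AdjTwo G b x' y' w → G.Adj w x' := by
    rintro w hwb ⟨i, j, hij, hi, hj, hwi, hwj⟩
    rcases hi with rfl | rfl | rfl <;> rcases hj with rfl | rfl | rfl <;>
      first
        | exact absurd hwi hwb
        | exact absurd hwj hwb
        | exact absurd rfl hij
        | exact hwi
        | exact hwj
  have hax' : G.Adj a x' := by
    rcases claim1 hpf hbx' hx'y' hby' a (hra.trans hrb.symm) with (rfl | rfl | rfl) | h2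
    · exact absurd hac hbc
    · exact absurd hbx'.symm hab
    · exact absurd hby'.symm hab
    · exact getx a hab h2
  have hcx' : G.Adj c x' := by
    rcases claim1 hpf hbx' hx'y' hby' c
        (hac.symm.reachable.trans (hra.trans hrb.symm)) with (rfl | rfl | rfl) | h2
    · exact absurd hac hab
    · exact absurd hbx' hbc
    · exact absurd hby' hbc
    · exact getx c (fun h => hbc h.symm) h2
  exact paw_of hpf hax'.symm hac hcx' hbx' (fun h => hab h.symm) hbc

theorem stmt5 {V : Type} [Fintype V] (G : SimpleGraph V) :
    IndSubgraphFree pawGraph G ↔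
    ∀ K : G.ConnectedComponent,
      (G.induce K.supp).CliqueFree 3 ∨ IsCompleteMultipartiteGraph (G.induce K.supp) := by
  classical
  constructor
  · intro hpf K
    by_cases htf : (G.induce K.supp).CliqueFree 3
    · exact Or.inl htf
    · right
      rw [SimpleGraph.CliqueFree] at htf
      push_neg at htf
      obtain ⟨t, ht⟩ := htf
      obtain ⟨x, y, z, hxy, hxz, hyz, rfl⟩ := Finset.card_eq_three.mp ht.card_eq
      have hTxy : G.Adj ↑x ↑y := ht.isClique (by simp) (by simp) hxy
      have hTxz : G.Adj ↑x ↑z := ht.isClique (by simp) (by simp) hxz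
      have hTyz : G.Adj ↑y ↑z := ht.isClique (by simp) (by simp) hyz
      have hreach : ∀ a b : ↥K.supp, G.Reachable ↑a ↑b := by
        intro a b
        have ha := (SimpleGraph.ConnectedComponent.mem_supp_iff K ↑a).mp a.2
        have hb := (SimpleGraph.ConnectedComponent.mem_supp_iff K ↑b).mp b.2
        exact SimpleGraph.ConnectedComponent.exact (ha.trans hb.symm)
      have key : ∀ a b c : ↥K.supp, ¬ G.Adj ↑a ↑b → ¬ G.Adj ↑b ↑c → ¬ G.Adj ↑a ↑c := by
        intro a b c h1 h2 h3
        exact key_trans hpf hTxy hTyz hTxz (hreach a x) (hreach b x) h1 h2 h3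
      letI st : Setoid ↥K.supp := ⟨fun u v => ¬ G.Adj ↑u ↑v,
        ⟨fun u => G.irrefl, fun {u v} h h' => h h'.symm, fun {u v w} h1 h2 => key _ _ _ h1 h2⟩⟩
      refine ⟨Quotient st, Quotient.mk st, fun u v => ?_⟩
      constructor
      · intro hadj heq
        exact Quotient.exact heq hadj
      · intro hne
        by_contra hnadj
        exact hne (Quotient.sound hnadj)
  · intro hK s hne
    obtain ⟨e⟩ := hne
    set f := e.symm with hf
    have hmr : ∀ i j : Fin 4, (G.induce s).Adj (f i) (f j) ↔ pawGraph.Adj i j :=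
      fun i j => f.map_rel_iff
    have h01 : G.Adj ↑(f 0) ↑(f 1) := (hmr 0 1).mpr (by decide)
    have h12 : G.Adj ↑(f 1) ↑(f 2) := (hmr 1 2).mpr (by decide)
    have h02 : G.Adj ↑(f 0) ↑(f 2) := (hmr 0 2).mpr (by decide)
    have h03 : G.Adj ↑(f 0) ↑(f 3) := (hmr 0 3).mpr (by decide)
    have h13 : ¬ G.Adj ↑(f 1) ↑(f 3) := fun h => (by decide : ¬ pawGraph.Adj 1 3) ((hmr 1 3).mp h)
    have h23 : ¬ G.Adj ↑(f 2) ↑(f 3) := fun h => (by decide : ¬ pawGraph.Adj 2 3) ((hmr 2 3).mp h)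
    set K := G.connectedComponentMk ↑(f 0) with hKdef
    have mem : ∀ i : Fin 4, G.Reachable ↑(f 0) ↑(f i) → ↑(f i) ∈ K.supp := by
      intro i h
      rw [SimpleGraph.ConnectedComponent.mem_supp_iff]
      exact (SimpleGraph.ConnectedComponent.sound h).symm
    have m0 : ↑(f 0) ∈ K.supp := mem 0 (SimpleGraph.Reachable.refl _)
    have m1 : ↑(f 1) ∈ K.supp := mem 1 h01.reachable
    have m2 : ↑(f 2) ∈ K.supp := mem 2 h02.reachable
    have m3 : ↑(f 3) ∈ K.supp := mem 3 h03.reachable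
    set u0 : ↥K.supp := ⟨↑(f 0), m0⟩
    set u1 : ↥K.supp := ⟨↑(f 1), m1⟩
    set u2 : ↥K.supp := ⟨↑(f 2), m2⟩
    set u3 : ↥K.supp := ⟨↑(f 3), m3⟩
    rcases hK K with htf | ⟨ι, p, hp⟩
    · exact htf {u0, u1, u2} (SimpleGraph.is3Clique_triple_iff.mpr ⟨h01, h02, h12⟩)
    · have e12 : p u1 ≠ p u2 := (hp u1 u2).mp h12
      have ne13 : p u1 = p u3 := by
        by_contra hnep
        exact h13 ((hp u1 u3).mpr hnep)
      have ne23 : p u2 = p u3 := by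
        by_contra hnep
        exact h23 ((hp u2 u3).mpr hnep)
      exact e12 (ne13.trans ne23.symm)
end

section
/- Let G be a tight graph with set T of dense vertices, and let c be a b-colouring of G with exactly m(G) colours. Then the set of b-chromatic vertices of c is exactly T. -/
open SimpleGraph

lemma bvertex_dense {V : Type*} [Fintype V] (G : SimpleGraph V)
    (c : V → ℕ) (hm : numColors c = mDegree G) (v : V) (hv : IsBVertex G c v) :
    v ∈ denseSet G := by
  classical
  have hcv : c v ∈ Set.range c := ⟨v, rfl⟩
  set s : Set ℕ := Set.range c \ {c v} with hs
  set t : Set V := G.neighborSet v with ht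
  set f : ℕ → V := fun j =>
    if h : j ∈ Set.range c ∧ j ≠ c v then (hv j h.1 h.2).choose else v with hf
  have hspec : ∀ j ∈ s, G.Adj v (f j) ∧ c (f j) = j := by
    intro j hj
    have h : j ∈ Set.range c ∧ j ≠ c v := ⟨hj.1, hj.2⟩
    simp only [hf, dif_pos h]
    exact (hv j h.1 h.2).choose_spec
  have hmaps : ∀ j ∈ s, f j ∈ t := fun j hj => (hspec j hj).1
  have hinj : Set.InjOn f s := by
    intro a ha b hb hab
    rw [← (hspec a ha).2, ← (hspec b hb).2, hab]
  have hle : s.ncard ≤ t.ncard :=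
    Set.ncard_le_ncard_of_injOn f hmaps hinj t.toFinite
  have hcard : s.ncard + 1 = (Set.range c).ncard :=
    Set.ncard_diff_singleton_add_one hcv (Set.finite_range c)
  have : mDegree G ≤ t.ncard + 1 := by
    rw [← hm]
    unfold numColors
    omega
  exact this

theorem stmt8 {V : Type*} [Fintype V] (G : SimpleGraph V) (ht : IsTight G)
    (c : V → ℕ) (hb : IsBColoring G c) (hm : numColors c = mDegree G) :
    ∀ v : V, IsBVertex G c v ↔ v ∈ denseSet G := by
  classical
  set B : Set V := {v | IsBVertex G c v} with hB
  have hBsub : B ⊆ denseSet G := fun v hv => bvertex_dense G c hm v hv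
  have hBeq : B = denseSet G := by
    rcases Set.eq_empty_or_nonempty (Set.range c) with hrange | hrange
    · -- no colours: mDegree = 0, dense set empty
      have h0 : (Set.range c).ncard = 0 := by rw [hrange]; simp
      have hd0 : (denseSet G).ncard = 0 := by
        rw [ht.1, ← hm]; exact h0
      apply Set.eq_of_subset_of_ncard_le hBsub _ (Set.toFinite _)
      rw [hd0]; exact Nat.zero_le _
    · obtain ⟨j0, v0, hv0⟩ := hrange
      set g : ℕ → V := fun j =>
        if h : j ∈ Set.range c then (hb.2 j h).choose else v0 with hg
      have hspec : ∀ j ∈ Set.range c, c (g j) = j ∧ IsBVertex G c (g j) := by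
        intro j hj
        simp only [hg, dif_pos hj]
        exact (hb.2 j hj).choose_spec
      have hmaps : ∀ j ∈ Set.range c, g j ∈ B := fun j hj => (hspec j hj).2
      have hinj : Set.InjOn g (Set.range c) := by
        intro a ha b hbb hab
        rw [← (hspec a ha).1, ← (hspec b hbb).1, hab]
      have hle : (Set.range c).ncard ≤ B.ncard :=
        Set.ncard_le_ncard_of_injOn g hmaps hinj B.toFinite
      apply Set.eq_of_subset_of_ncard_le hBsub _ (Set.toFinite _)
      calc (denseSet G).ncard = mDegree G := ht.1
        _ = (Set.range c).ncard := hm.symm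
        _ ≤ B.ncard := hle
  intro v
  constructor
  · exact fun hv => bvertex_dense G c hm v hv
  · intro hv
    rw [← hBeq] at hv
    exact hv
end

section
/- Let G be a tight graph with set T of its m(G) dense vertices and let c be a tight b-colouring of G. Then each colour class of c contains exactly one vertex of T, and this vertex has exactly one neighbour in each other colour class. -/
open SimpleGraph

theorem stmt9 {V : Type*} [Fintype V] (G : SimpleGraph V) (ht : IsTight G)
    (c : V → ℕ) (hb : IsBColoring G c) (hm : numColors c = mDegree G) :
    (∀ j ∈ Set.range c, ∃! u, u ∈ denseSet G ∧ c u = j) ∧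
    (∀ u ∈ denseSet G, ∀ j ∈ Set.range c, j ≠ c u → ∃! w, G.Adj u w ∧ c w = j) := by
  classical
  have hfinV : (Set.range c).Finite := Set.finite_range c
  have hm' : (Set.range c).ncard = mDegree G := hm
  set m := mDegree G with hmdef
  -- any b-vertex is dense
  have hdense : ∀ v, IsBVertex G c v → v ∈ denseSet G := by
    intro v hv
    have hsub : Set.range c \ {c v} ⊆ c '' (G.neighborSet v) := by
      rintro j ⟨hj, hj'⟩
      obtain ⟨u, hadj, hcu⟩ := hv j hj (by simpa using hj')
      exact ⟨u, hadj, hcu⟩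
    have h1 : (Set.range c \ {c v}).ncard ≤ (c '' (G.neighborSet v)).ncard :=
      Set.ncard_le_ncard hsub ((G.neighborSet v).toFinite.image c)
    have h2 : (c '' (G.neighborSet v)).ncard ≤ (G.neighborSet v).ncard :=
      Set.ncard_image_le (G.neighborSet v).toFinite
    have h3 : (Set.range c \ {c v}).ncard + 1 = (Set.range c).ncard :=
      Set.ncard_diff_singleton_add_one ⟨v, rfl⟩ hfinV
    have : m ≤ (Set.range c \ {c v}).ncard + 1 := by
      rw [h3]; exact le_of_eq hm'.symm
    exact le_trans this (by omega)
  -- c '' denseSet = range c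
  have himg : c '' denseSet G = Set.range c := by
    apply Set.Subset.antisymm
    · rintro j ⟨u, _, rfl⟩; exact ⟨u, rfl⟩
    · rintro j ⟨v, rfl⟩
      obtain ⟨w, hw, hwb⟩ := hb.2 (c v) ⟨v, rfl⟩
      exact ⟨w, hdense w hwb, hw⟩
  have hinj : Set.InjOn c (denseSet G) := by
    apply Set.injOn_of_ncard_image_eq _ (Set.toFinite _)
    rw [himg, hm', ht.1]
  -- every dense vertex is a b-vertex
  have hdb : ∀ u ∈ denseSet G, IsBVertex G c u := by
    intro u hu
    obtain ⟨w, hw, hwb⟩ := hb.2 (c u) ⟨u, rfl⟩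
    have : w = u := hinj (hdense w hwb) hu hw
    rwa [this] at hwb
  constructor
  · intro j hj
    obtain ⟨u, hu, hcu⟩ : j ∈ c '' denseSet G := himg ▸ hj
    exact ⟨u, ⟨hu, hcu⟩, fun v ⟨hv, hcv⟩ => hinj hv hu (hcv.trans hcu.symm)⟩
  · intro u hu j hj hjne
    have hbu := hdb u hu
    -- c '' N = range c \ {c u}
    have himgN : c '' (G.neighborSet u) = Set.range c \ {c u} := by
      apply Set.Subset.antisymm
      · rintro k ⟨w, hw, rfl⟩
        exact ⟨⟨w, rfl⟩, by simpa using (hb.1 u w hw).symm⟩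
      · rintro k ⟨hk, hk'⟩
        obtain ⟨w, hadj, hcw⟩ := hbu k hk (by simpa using hk')
        exact ⟨w, hadj, hcw⟩
    have hcardN : (G.neighborSet u).ncard = m - 1 := ht.2 u hu
    have h3 : (Set.range c \ {c u}).ncard + 1 = (Set.range c).ncard :=
      Set.ncard_diff_singleton_add_one ⟨u, rfl⟩ hfinV
    have hm1 : 1 ≤ m := by
      rw [← hm']
      have : ({c u} : Set ℕ).ncard ≤ (Set.range c).ncard :=
        Set.ncard_le_ncard (by simp [Set.singleton_subset_iff]) hfinV
      simpa using this
    have hinjN : Set.InjOn c (G.neighborSet u) := by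
      apply Set.injOn_of_ncard_image_eq _ (Set.toFinite _)
      rw [himgN, hcardN]
      rw [hm'] at h3
      omega
    obtain ⟨w, hadj, hcw⟩ := hbu j hj hjne
    exact ⟨w, ⟨hadj, hcw⟩, fun w' ⟨hadj', hcw'⟩ =>
      hinjN hadj' hadj (hcw'.trans hcw.symm)⟩
end

section
/- Let G be a tight graph with set T of dense vertices and let c be a tight b-colouring of G. Then every vertex u of T that dominates G[T] (i.e., is adjacent to all other vertices of T) lies in a colour class containing no vertex of the outer boundary δT of T. -/
open SimpleGraph

/-!
Every b-vertex of an `m`-colouring has degree at least `m - 1`, so it is dense. The `m` colour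
classes supply `m` distinct b-vertices, which must therefore exhaust the `m` dense vertices. A
dense neighbour `t ≠ u` of `s ∈ δT` is then a b-vertex of degree exactly `m - 1`, so its
neighbours carry pairwise distinct colours; since `u` is one of them, `c s = c u` would force
`s = u ∈ T`.
-/

section BColoring

variable {V : Type*} {G : SimpleGraph V} {c : V → ℕ} {v : V}

lemma IsBVertex.range_diff_subset_image (hv : IsBVertex G c v) :
    Set.range c \ {c v} ⊆ c '' G.neighborSet v := by
  rintro j ⟨hj, hjv⟩
  obtain ⟨w, hw, rfl⟩ := hv j hj hjv
  exact ⟨w, hw, rfl⟩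

lemma IsBVertex.image_neighborSet_eq (hc : IsProperColoring G c) (hv : IsBVertex G c v) :
    c '' G.neighborSet v = Set.range c \ {c v} := by
  refine Set.Subset.antisymm ?_ hv.range_diff_subset_image
  rintro _ ⟨w, hw, rfl⟩
  exact ⟨⟨w, rfl⟩, fun h => hc v w hw h.symm⟩

variable [Finite V]

lemma IsBVertex.numColors_le (hv : IsBVertex G c v) :
    numColors c ≤ (G.neighborSet v).ncard + 1 := by
  have := (Set.ncard_le_ncard hv.range_diff_subset_image (Set.toFinite _)).trans
    (Set.ncard_image_le (Set.toFinite _))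
  rw [Set.ncard_sdiff_singleton_of_mem (Set.mem_range_self v)] at this
  unfold numColors
  omega

lemma IsBVertex.injOn_neighborSet (hc : IsProperColoring G c) (hv : IsBVertex G c v)
    (hdeg : (G.neighborSet v).ncard ≤ numColors c - 1) : Set.InjOn c (G.neighborSet v) := by
  have hcard : (c '' G.neighborSet v).ncard = numColors c - 1 := by
    rw [hv.image_neighborSet_eq hc, Set.ncard_sdiff_singleton_of_mem (Set.mem_range_self v)]
    rfl
  refine Set.injOn_of_ncard_image_eq (le_antisymm (Set.ncard_image_le (Set.toFinite _)) ?_)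
    (Set.toFinite _)
  omega

lemma IsBColoring.isBVertex_of_mem {T : Set V} (hb : IsBColoring G c)
    (hT : ∀ v, IsBVertex G c v → v ∈ T) (hcard : T.ncard ≤ numColors c) {t : V} (ht : t ∈ T) :
    IsBVertex G c t := by
  set B := {v | IsBVertex G c v}
  have hcover : c '' B = Set.range c := by
    refine Set.Subset.antisymm (Set.image_subset_range c B) ?_
    rintro j hj
    obtain ⟨v, rfl, hv⟩ := hb.2 j hj
    exact ⟨v, hv, rfl⟩
  have hBT : B = T := by
    refine Set.eq_of_subset_of_ncard_le hT (hcard.trans ?_) (Set.toFinite _)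
    rw [numColors, ← hcover]
    exact Set.ncard_image_le (Set.toFinite B)
  rw [← hBT] at ht
  exact ht

end BColoring

theorem stmt10 {V : Type*} [Fintype V] (G : SimpleGraph V) (ht : IsTight G)
    (c : V → ℕ) (hb : IsBColoring G c) (hm : numColors c = mDegree G)
    (u : V) (hu : u ∈ denseSet G)
    (hdom : ∀ w ∈ denseSet G, w ≠ u → G.Adj u w) :
    ∀ s ∈ outerBoundary G (denseSet G), c s ≠ c u := by
  rintro s ⟨hsT, t, htT, hst⟩ hcs
  have hdense : ∀ v, IsBVertex G c v → v ∈ denseSet G := fun v hv =>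
    show mDegree G ≤ _ from hm ▸ hv.numColors_le
  have htb : IsBVertex G c t := hb.isBVertex_of_mem hdense (by rw [ht.1, hm]) htT
  rcases eq_or_ne t u with rfl | htu
  · exact hb.1 s t hst hcs
  · have hinj := htb.injOn_neighborSet hb.1 (by rw [ht.2 t htT, hm])
    exact hsT (hinj hst.symm (hdom t htT htu).symm hcs ▸ hu)
end

section
/- If G is a tight graph and c is a b-precolouring extension of an S'-partial b-colouring c' of G, then c is a tight b-colouring of G (i.e., c uses exactly m(G) colours). -/
open SimpleGraph

theorem stmt11 {V : Type*} [Fintype V] (G : SimpleGraph V) (ht : IsTight G)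
    (S' : Set V) (hS' : S' ⊆ outerBoundary G (denseSet G)) (c' c : V → ℕ)
    -- `c'` is an `S'`-partial b-colouring of `G`:
    (h1 : ∀ u ∈ S' ∪ denseSet G, ∀ v ∈ S' ∪ denseSet G, G.Adj u v → c' u ≠ c' v)
    (h2 : ∀ u ∈ denseSet G, ∀ v ∈ denseSet G, u ≠ v → c' u ≠ c' v)
    (h3 : ∀ u ∈ denseSet G, (∃ s ∈ S', c' s = c' u) → ∀ v ∈ denseSet G, v ≠ u →
        ∃! w, w ∈ S' ∪ denseSet G ∧ G.Adj v w ∧ c' w = c' u)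
    -- `c` is a b-precolouring extension of `c'`:
    (hb : IsBColoring G c)
    (hext : ∀ v ∈ S' ∪ denseSet G, c v = c' v)
    (hcls : ∀ s ∈ outerBoundary G (denseSet G), s ∉ S' →
        ∀ t ∈ outerBoundary G (denseSet G), t ≠ s → c t ≠ c s) :
    numColors c = mDegree G := by
  classical
  have hfinR : (Set.range c).Finite := Set.toFinite _
  -- lower bound: c is injective on the dense set
  have hlow : mDegree G ≤ numColors c := by
    rw [← ht.1]
    apply Set.ncard_le_ncard_of_injOn c
    · intro v _; exact Set.mem_range_self v
    · intro u hu v hv hcc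
      by_contra hne
      exact h2 u hu v hv hne
        (by rw [← hext u (Or.inr hu), ← hext v (Or.inr hv)]; exact hcc)
  -- upper bound: any b-colouring uses at most mDegree colours
  have hhigh : numColors c ≤ mDegree G := by
    rcases Set.eq_empty_or_nonempty (Set.range c) with h0 | ⟨y, v0, rfl⟩
    · simp [numColors, h0]
    set k := numColors c with hk
    have key : k ≤ {v : V | k ≤ (G.neighborSet v).ncard + 1}.ncard := by
      choose f hf1 hf2 using hb.2
      let g : ℕ → V := fun j => if h : j ∈ Set.range c then f j h else v0
      apply Set.ncard_le_ncard_of_injOn g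
      · intro j hj
        simp only [g, dif_pos hj, Set.mem_setOf_eq]
        have hcf : c (f j hj) = j := hf1 j hj
        have hsub : Set.range c \ {j} ⊆ c '' (G.neighborSet (f j hj)) := by
          rintro j' ⟨hj', hne⟩
          have hne' : j' ≠ c (f j hj) := by rw [hcf]; exact hne
          obtain ⟨u, hadj, hcu⟩ := hf2 j hj j' hj' hne'
          exact ⟨u, hadj, hcu⟩
        have h1' : (Set.range c \ {j}).ncard ≤ (c '' (G.neighborSet (f j hj))).ncard :=
          Set.ncard_le_ncard hsub (Set.toFinite _)
        have h2' : (c '' (G.neighborSet (f j hj))).ncard ≤ (G.neighborSet (f j hj)).ncard :=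
          Set.ncard_image_le (Set.toFinite _)
        have h3' : (Set.range c \ {j}).ncard + 1 = (Set.range c).ncard :=
          Set.ncard_diff_singleton_add_one hj hfinR
        have : k = (Set.range c \ {j}).ncard + 1 := by rw [h3']; rfl
        omega
      · intro j hj j' hj' hgg
        have e1 : c (g j) = j := by simp only [g, dif_pos hj]; exact hf1 j hj
        have e2 : c (g j') = j' := by simp only [g, dif_pos hj']; exact hf1 j' hj'
        rw [← e1, ← e2, hgg]
    have hBdd : BddAbove {k | k ≤ {v : V | k ≤ (G.neighborSet v).ncard + 1}.ncard} := by
      refine ⟨Nat.card V, fun n hn => hn.trans ?_⟩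
      calc {v : V | n ≤ (G.neighborSet v).ncard + 1}.ncard
          ≤ (Set.univ : Set V).ncard := Set.ncard_le_ncard (Set.subset_univ _) Set.finite_univ
        _ = Nat.card V := Set.ncard_univ V
    exact le_csSup hBdd key
  exact le_antisymm hhigh hlow
end

section
/- Let G be a connected 3P1-free graph with no dominating vertex. Then G has a fall colouring if and only if the complement of G has a perfect matching; moreover, in this case every fall colouring of G has all colour classes of size exactly 2, so G has a fall colouring with exactly |V(G)|/2 colours and no other fall colourings. -/
open SimpleGraph

/-
In a fall colouring every vertex outside a colour class has a neighbour in it, so a singleton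
class would be a dominating vertex; and in a 3P1-free graph a colour class, being independent,
has at most two vertices. Hence, without dominating vertices, the fall colourings of a 3P1-free
graph are exactly the proper colourings whose classes are pairs of non-adjacent vertices, i.e.
the perfect matchings of the complement. Conversely any proper colouring of a 3P1-free graph
without singleton classes is a fall colouring: a vertex missing both vertices of another class
would form an independent triple with them.
-/

section

variable {V : Type*} {G : SimpleGraph V} {c : V → ℕ}

def HasPairClasses (c : V → ℕ) : Prop :=
  ∀ v, ∃! w, v ≠ w ∧ c v = c w

lemma HasPairClasses.ncard_colorClass (hpair : HasPairClasses c) {j : ℕ}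
    (hj : j ∈ Set.range c) : {v | c v = j}.ncard = 2 := by
  obtain ⟨v, rfl⟩ := hj
  obtain ⟨w, ⟨hvw, hcw⟩, hunique⟩ := hpair v
  have hclass : {x | c x = c v} = {v, w} := by
    ext x
    simp only [Set.mem_ofPred_eq, Set.mem_insert_iff, Set.mem_singleton_iff]
    refine ⟨fun hx => or_iff_not_imp_left.mpr fun hxv => hunique x ⟨Ne.symm hxv, hx.symm⟩,
      ?_⟩
    rintro (rfl | rfl)
    exacts [rfl, hcw.symm]
  rw [hclass, Set.ncard_pair hvw]

lemma HasPairClasses.card_eq_two_mul_numColors [Fintype V] (hpair : HasPairClasses c) :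
    Fintype.card V = 2 * numColors c := by
  classical
  have hrange : Set.range c = ↑(Finset.univ.image c) := by simp
  calc Fintype.card V
      = ∑ j ∈ Finset.univ.image c, {v | c v = j}.ncard := by
        rw [← Finset.card_univ, Finset.card_eq_sum_card_image c Finset.univ]
        refine Finset.sum_congr rfl fun j _ => ?_
        rw [← Set.ncard_coe_finset]
        simp
    _ = 2 * numColors c := by
        rw [Finset.sum_congr rfl fun j hj => hpair.ncard_colorClass (hrange ▸ hj),
          Finset.sum_const, smul_eq_mul, numColors, hrange, Set.ncard_coe_finset, mul_comm]

lemma IsFallColoring.exists_ne_color_eq (hc : IsFallColoring G c)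
    (hnodom : ¬ ∃ v : V, ∀ w, w ≠ v → G.Adj v w) (v : V) :
    ∃ w, v ≠ w ∧ c v = c w := by
  by_contra! hsingleton
  refine hnodom ⟨v, fun w hwv => ?_⟩
  obtain ⟨u, hwu, hcu⟩ := hc.2 w (c v) ⟨v, rfl⟩ fun h => hsingleton w hwv.symm h
  obtain rfl : u = v := by_contra fun huv => hsingleton u (Ne.symm huv) hcu.symm
  exact hwu.symm

lemma IsProperColoring.eq_of_color_eq
    (h3p1 : ∀ u v w : V, u ≠ v → u ≠ w → v ≠ w →
      ¬ G.Adj u v → ¬ G.Adj u w → ¬ G.Adj v w → False)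
    (hc : IsProperColoring G c) {v w w' : V} (hw : v ≠ w) (hw' : v ≠ w')
    (hcw : c v = c w) (hcw' : c v = c w') : w = w' :=
  by_contra fun hww' => h3p1 v w w' hw hw' hww' (fun h => hc v w h hcw)
    (fun h => hc v w' h hcw') (fun h => hc w w' h (hcw.symm.trans hcw'))

lemma IsProperColoring.isFallColoring
    (h3p1 : ∀ u v w : V, u ≠ v → u ≠ w → v ≠ w →
      ¬ G.Adj u v → ¬ G.Adj u w → ¬ G.Adj v w → False)
    (hc : IsProperColoring G c) (hpartner : ∀ v, ∃ w, v ≠ w ∧ c v = c w) :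
    IsFallColoring G c := by
  refine ⟨hc, ?_⟩
  rintro v _ ⟨a, rfl⟩ hva
  obtain ⟨b, hab, hcb⟩ := hpartner a
  by_contra! hmiss
  exact h3p1 v a b (fun h => hva (h ▸ rfl)) (fun h => hva (h ▸ hcb)) hab
    (fun h => hmiss a h rfl) (fun h => hmiss b h hcb.symm) (fun h => hc a b h hcb)

lemma IsFallColoring.hasPairClasses
    (h3p1 : ∀ u v w : V, u ≠ v → u ≠ w → v ≠ w →
      ¬ G.Adj u v → ¬ G.Adj u w → ¬ G.Adj v w → False)
    (hnodom : ¬ ∃ v : V, ∀ w, w ≠ v → G.Adj v w) (hc : IsFallColoring G c) :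
    HasPairClasses c := fun v =>
  let ⟨w, hvw⟩ := hc.exists_ne_color_eq hnodom v
  ⟨w, hvw, fun _ hw' => (hc.1.eq_of_color_eq h3p1 hvw.1 hw'.1 hvw.2 hw'.2).symm⟩

lemma HasPairClasses.exists_isPerfectMatching_compl (hpair : HasPairClasses c)
    (hc : IsProperColoring G c) : ∃ M : Gᶜ.Subgraph, M.IsPerfectMatching := by
  refine ⟨{ verts := Set.univ
            Adj := fun u v => u ≠ v ∧ c u = c v
            adj_sub := fun h => (compl_adj G _ _).mpr ⟨h.1, fun hadj => hc _ _ hadj h.2⟩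
            edge_vert := fun _ => Set.mem_univ _
            symm := ⟨fun _ _ h => ⟨h.1.symm, h.2.symm⟩⟩ }, ?_⟩
  exact Subgraph.isPerfectMatching_iff.mpr hpair

lemma SimpleGraph.Subgraph.IsPerfectMatching.exists_fun_nat_eq_iff_adj [Finite V]
    {M : G.Subgraph} (hM : M.IsPerfectMatching) :
    ∃ c : V → ℕ, ∀ u v, u ≠ v → (c u = c v ↔ M.Adj u v) := by
  obtain ⟨e, he⟩ := Countable.exists_injective_nat M.edgeSet
  refine ⟨fun v => e (hM.1.toEdge ⟨v, hM.2 v⟩), fun u v huv => ⟨fun h => ?_,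
    fun h => congrArg e (hM.1.toEdge_eq_toEdge_of_adj h)⟩⟩
  obtain ⟨w, huw, -⟩ := hM.1 (hM.2 u)
  have hv := hM.1.mem_coe_toEdge (hM.2 v)
  rw [← he h, hM.1.toEdge_eq_of_adj huw, Sym2.mem_iff] at hv
  obtain rfl : v = w := hv.resolve_left (Ne.symm huv)
  exact huw

lemma exists_isFallColoring_of_isPerfectMatching_compl [Finite V]
    (h3p1 : ∀ u v w : V, u ≠ v → u ≠ w → v ≠ w →
      ¬ G.Adj u v → ¬ G.Adj u w → ¬ G.Adj v w → False)
    {M : Gᶜ.Subgraph} (hM : M.IsPerfectMatching) : ∃ c : V → ℕ, IsFallColoring G c := by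
  obtain ⟨c, hc⟩ := hM.exists_fun_nat_eq_iff_adj
  have hproper : IsProperColoring G c := fun u v hadj hcuv =>
    (compl_adj G u v).mp (M.adj_sub ((hc u v hadj.ne).mp hcuv)) |>.2 hadj
  refine ⟨c, hproper.isFallColoring h3p1 fun v => ?_⟩
  obtain ⟨w, hvw, -⟩ := hM.1 (hM.2 v)
  exact ⟨w, hvw.ne, (hc v w hvw.ne).mpr hvw⟩

end

theorem stmt12_general {V : Type} [Fintype V] (G : SimpleGraph V)
    (h3p1 : ∀ u v w : V, u ≠ v → u ≠ w → v ≠ w →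
      ¬ G.Adj u v → ¬ G.Adj u w → ¬ G.Adj v w → False)
    (hnodom : ¬ ∃ v : V, ∀ w, w ≠ v → G.Adj v w) :
    ((∃ c : V → ℕ, IsFallColoring G c) ↔
      ∃ M : (Gᶜ).Subgraph, M.IsPerfectMatching) ∧
    (∀ c : V → ℕ, IsFallColoring G c →
      (∀ j ∈ Set.range c, {v | c v = j}.ncard = 2) ∧
      numColors c = Fintype.card V / 2) := by
  refine ⟨⟨fun ⟨c, hc⟩ => ?_, fun ⟨M, hM⟩ => ?_⟩, fun c hc => ?_⟩
  · exact (hc.hasPairClasses h3p1 hnodom).exists_isPerfectMatching_compl hc.1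
  · exact exists_isFallColoring_of_isPerfectMatching_compl h3p1 hM
  · have hpair := hc.hasPairClasses h3p1 hnodom
    refine ⟨fun j hj => hpair.ncard_colorClass hj, ?_⟩
    rw [hpair.card_eq_two_mul_numColors]
    omega

theorem stmt12 {V : Type} [Fintype V] (G : SimpleGraph V) (hconn : G.Connected)
    (h3p1 : ∀ u v w : V, u ≠ v → u ≠ w → v ≠ w →
      ¬ G.Adj u v → ¬ G.Adj u w → ¬ G.Adj v w → False)
    (hnodom : ¬ ∃ v : V, ∀ w, w ≠ v → G.Adj v w) :
    ((∃ c : V → ℕ, IsFallColoring G c) ↔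
      ∃ M : (Gᶜ).Subgraph, M.IsPerfectMatching) ∧
    (∀ c : V → ℕ, IsFallColoring G c →
      (∀ j ∈ Set.range c, {v | c v = j}.ncard = 2) ∧
      numColors c = Fintype.card V / 2) :=
  stmt12_general G h3p1 hnodom
end

section
/- If G is a graph whose vertex set is partitioned into parts V(G1),...,V(Gr) forming the co-components of G (so V(Gi) is complete to V(Gj) for i≠j), then G has a fall colouring if and only if every induced subgraph G[V(Gi)] has a fall colouring; moreover F(G) = { k1+...+kr : ki ∈ F(G[V(Gi)]) }. -/
open SimpleGraph

private lemma ncard_iUnion_eq_sum' {ι : Type} [Fintype ι] (f : ι → Set ℕ)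
    (hfin : ∀ i, (f i).Finite) (hd : ∀ i j, i ≠ j → Disjoint (f i) (f j)) :
    (⋃ i, f i).ncard = ∑ i, (f i).ncard := by
  classical
  have h1 : (⋃ i, f i) = ↑(Finset.univ.biUnion fun i => (hfin i).toFinset) := by
    ext x; simp [Set.Finite.mem_toFinset]
  rw [h1, Set.ncard_coe_finset, Finset.card_biUnion]
  · exact Finset.sum_congr rfl fun i _ => by
      rw [← Set.ncard_coe_finset, Set.Finite.coe_toFinset]
  · intro i _ j _ hij
    exact Set.Finite.disjoint_toFinset.mpr (hd i j hij)

private lemma same_comp {V : Type} (G : SimpleGraph V) {c : V → ℕ}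
    (hc : IsProperColoring G c) {u v : V} (h : c u = c v) :
    (Gᶜ).connectedComponentMk u = (Gᶜ).connectedComponentMk v := by
  by_cases huv : u = v
  · rw [huv]
  · have hna : ¬ G.Adj u v := fun ha => hc u v ha h
    exact ConnectedComponent.sound ((G.compl_adj u v).mpr ⟨huv, hna⟩).reachable

private lemma adj_of_ne_comp {V : Type} (G : SimpleGraph V) {u v : V}
    (h : (Gᶜ).connectedComponentMk u ≠ (Gᶜ).connectedComponentMk v) : G.Adj u v := by
  by_contra ha
  have huv : u ≠ v := fun e => h (by rw [e])
  exact h (ConnectedComponent.sound ((G.compl_adj u v).mpr ⟨huv, ha⟩).reachable)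

private lemma restrict_fall {V : Type} {G : SimpleGraph V} {c : V → ℕ}
    (hc : IsFallColoring G c) (K : (Gᶜ).ConnectedComponent) :
    IsFallColoring (G.induce K.supp) (fun x => c x.val) := by
  obtain ⟨hp, hf⟩ := hc
  constructor
  · intro u v huv h
    exact hp u.val v.val huv h
  · rintro v j ⟨w, rfl⟩ hj
    obtain ⟨u, hu, hcu⟩ := hf v.val (c w.val) ⟨w.val, rfl⟩ hj
    have hKu : u ∈ K.supp := by
      rw [ConnectedComponent.mem_supp_iff]
      exact (same_comp G hp hcu).trans ((ConnectedComponent.mem_supp_iff _ _).mp w.2)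
    exact ⟨⟨u, hKu⟩, hu, hcu⟩

private lemma numColors_restrict_sum {V : Type} [Fintype V] {G : SimpleGraph V}
    [Fintype (Gᶜ).ConnectedComponent] {c : V → ℕ} (hp : IsProperColoring G c) :
    numColors c = ∑ K : (Gᶜ).ConnectedComponent, numColors (fun x : K.supp => c x.val) := by
  classical
  have hU : Set.range c
      = ⋃ K : (Gᶜ).ConnectedComponent, Set.range (fun x : K.supp => c x.val) := by
    ext j; constructor
    · rintro ⟨v, rfl⟩
      exact Set.mem_iUnion.mpr ⟨(Gᶜ).connectedComponentMk v,
        ⟨⟨v, (ConnectedComponent.mem_supp_iff _ _).mpr rfl⟩, rfl⟩⟩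
    · intro h
      obtain ⟨K, ⟨x, rfl⟩⟩ := Set.mem_iUnion.mp h
      exact ⟨x.val, rfl⟩
  rw [numColors, hU, ncard_iUnion_eq_sum']
  · rfl
  · intro K; exact Set.finite_range _
  · intro K K' hne
    rw [Set.disjoint_left]
    rintro j ⟨x, rfl⟩ ⟨y, hy⟩
    have h1 := same_comp G hp (show c x.val = c y.val from hy.symm)
    exact hne (((ConnectedComponent.mem_supp_iff _ _).mp x.2).symm.trans
      (h1.trans ((ConnectedComponent.mem_supp_iff _ _).mp y.2)))

private lemma build_fall {V : Type} [Fintype V] {G : SimpleGraph V}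
    [Fintype (Gᶜ).ConnectedComponent]
    (cc : ∀ K : (Gᶜ).ConnectedComponent, K.supp → ℕ)
    (hcc : ∀ K, IsFallColoring (G.induce K.supp) (cc K)) :
    ∃ c : V → ℕ, IsFallColoring G c ∧
      ∀ K, numColors (fun x : K.supp => c x.val) = numColors (cc K) := by
  classical
  obtain ⟨e, he⟩ := Countable.exists_injective_nat ((Gᶜ).ConnectedComponent)
  have mem : ∀ v : V, v ∈ ((Gᶜ).connectedComponentMk v).supp :=
    fun v => (ConnectedComponent.mem_supp_iff _ _).mpr rfl
  set c : V → ℕ := fun v =>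
    Nat.pair (e ((Gᶜ).connectedComponentMk v))
      (cc ((Gᶜ).connectedComponentMk v) ⟨v, mem v⟩) with hcdef
  have key : ∀ (v : V) (K : (Gᶜ).ConnectedComponent) (h : v ∈ K.supp),
      cc ((Gᶜ).connectedComponentMk v) ⟨v, mem v⟩ = cc K ⟨v, h⟩ := by
    intro v K h
    have h' : (Gᶜ).connectedComponentMk v = K := (ConnectedComponent.mem_supp_iff _ _).mp h
    subst h'; rfl
  have hcK : ∀ (K : (Gᶜ).ConnectedComponent) (x : K.supp),
      c x.val = Nat.pair (e K) (cc K x) := by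
    intro K x
    have h' : (Gᶜ).connectedComponentMk x.val = K :=
      (ConnectedComponent.mem_supp_iff _ _).mp x.2
    rw [hcdef]
    simp only []
    rw [key x.val K x.2, h']
  have hprop : IsProperColoring G c := by
    intro u v huv heq
    rw [hcdef] at heq
    obtain ⟨h1, h2⟩ := Nat.pair_eq_pair.mp heq
    have hKeq : (Gᶜ).connectedComponentMk u = (Gᶜ).connectedComponentMk v := he h1
    set K := (Gᶜ).connectedComponentMk u with hK
    have hvK : v ∈ K.supp := (ConnectedComponent.mem_supp_iff _ _).mpr hKeq.symm
    rw [key u K (mem u), key v K hvK] at h2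
    exact (hcc K).1 ⟨u, mem u⟩ ⟨v, hvK⟩ huv h2
  refine ⟨c, ⟨hprop, ?_⟩, ?_⟩
  · rintro v j ⟨w, rfl⟩ hne
    by_cases hcomp : (Gᶜ).connectedComponentMk w = (Gᶜ).connectedComponentMk v
    · set K := (Gᶜ).connectedComponentMk v with hK
      have hwK : w ∈ K.supp := (ConnectedComponent.mem_supp_iff _ _).mpr hcomp
      have hcw : c w = Nat.pair (e K) (cc K ⟨w, hwK⟩) := hcK K ⟨w, hwK⟩
      have hcv : c v = Nat.pair (e K) (cc K ⟨v, mem v⟩) := hcK K ⟨v, mem v⟩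
      have hne2 : cc K ⟨w, hwK⟩ ≠ cc K ⟨v, mem v⟩ := by
        intro h; apply hne; rw [hcw, hcv, h]
      obtain ⟨u, hu, hcu⟩ := (hcc K).2 ⟨v, mem v⟩ (cc K ⟨w, hwK⟩) ⟨⟨w, hwK⟩, rfl⟩ hne2
      refine ⟨u.val, hu, ?_⟩
      rw [hcK K u, hcu, hcw]
    · refine ⟨w, adj_of_ne_comp G (fun h => hcomp h.symm), rfl⟩
  · intro K
    have himg : Set.range (fun x : K.supp => c x.val)
        = (fun n => Nat.pair (e K) n) '' Set.range (cc K) := by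
      ext j; constructor
      · rintro ⟨x, rfl⟩
        exact ⟨cc K x, ⟨x, rfl⟩, (hcK K x).symm⟩
      · rintro ⟨n, ⟨x, rfl⟩, rfl⟩
        exact ⟨x, hcK K x⟩
    rw [numColors, numColors, himg,
      Set.ncard_image_of_injective _ (fun a b h => (Nat.pair_eq_pair.mp h).2)]

theorem stmt14 {V : Type} [Fintype V] (G : SimpleGraph V)
    [Fintype (Gᶜ).ConnectedComponent] :
    ((∃ c : V → ℕ, IsFallColoring G c) ↔
      ∀ K : (Gᶜ).ConnectedComponent,
        ∃ c : K.supp → ℕ, IsFallColoring (G.induce K.supp) c) ∧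
    fallSpectrum G = {n | ∃ k : (Gᶜ).ConnectedComponent → ℕ,
        (∀ K, k K ∈ fallSpectrum (G.induce K.supp)) ∧ ∑ K, k K = n} := by
  constructor
  · constructor
    · rintro ⟨c, hc⟩ K
      exact ⟨_, restrict_fall hc K⟩
    · intro h
      choose cc hcc using h
      obtain ⟨c, hc, -⟩ := build_fall cc hcc
      exact ⟨c, hc⟩
  · ext n
    simp only [fallSpectrum, Set.mem_setOf_eq]
    constructor
    · rintro ⟨c, hc, rfl⟩
      exact ⟨fun K => numColors (fun x : K.supp => c x.val),
        fun K => ⟨_, restrict_fall hc K, rfl⟩, (numColors_restrict_sum hc.1).symm⟩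
    · rintro ⟨k, hk, rfl⟩
      choose cc hcc hnum using hk
      obtain ⟨c, hc, hn⟩ := build_fall cc hcc
      exact ⟨c, hc, by
        rw [numColors_restrict_sum hc.1]
        exact Finset.sum_congr rfl fun K _ => (hn K).trans (hnum K)⟩
end

section
/- Let G be a graph that is the join of graphs G1,...,Gr (each vertex of Gi adjacent to each vertex of Gj for i≠j), and suppose each Gi has a b-colouring with mi colours in which the set of b-chromatic vertices is the set of maximum-degree vertices of Gi. Then combining these colourings with pairwise disjoint colour sets yields a b-colouring of G with m1+...+mr colours; in particular, if each Gi has a tight b-colouring and G is tight with dense-vertex set the union of the dense-vertex sets of the Gi, then G has a tight b-colouring. -/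
open SimpleGraph

lemma my_ncard_biUnion {α ι : Type*} (s : Finset ι) (f : ι → Set α)
    (hf : ∀ i, (f i).Finite)
    (h : ∀ i ∈ s, ∀ j ∈ s, i ≠ j → Disjoint (f i) (f j)) :
    (⋃ i ∈ s, f i).ncard = ∑ i ∈ s, (f i).ncard := by
  classical
  induction s using Finset.induction with
  | empty => simp
  | @insert a s ha ih =>
    rw [Finset.sum_insert ha]
    have he : (⋃ i ∈ insert a s, f i) = f a ∪ ⋃ i ∈ s, f i := by
      simp [Set.iUnion_or, Set.iUnion_union_distrib]
    have hd : Disjoint (f a) (⋃ i ∈ s, f i) :=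
      Set.disjoint_iUnion₂_right.mpr fun i hi =>
        h a (Finset.mem_insert_self a s) i (Finset.mem_insert_of_mem hi)
          (fun e => ha (e ▸ hi))
    rw [he, Set.ncard_union_eq hd (hf a) (Set.Finite.biUnion s.finite_toSet (fun i _ => hf i)),
      ih (fun i hi j hj hij =>
        h i (Finset.mem_insert_of_mem hi) j (Finset.mem_insert_of_mem hj) hij)]

lemma my_ncard_iUnion {α ι : Type*} [Fintype ι] (f : ι → Set α)
    (hf : ∀ i, (f i).Finite)
    (h : ∀ i j, i ≠ j → Disjoint (f i) (f j)) :
    (⋃ i, f i).ncard = ∑ i, (f i).ncard := by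
  rw [← Set.biUnion_univ, show (Set.univ : Set ι) = (Finset.univ : Finset ι) by simp]
  simpa using my_ncard_biUnion Finset.univ f hf (fun i _ j _ hij => h i j hij)

lemma isBColoring_comp {V : Type*} (G : SimpleGraph V) (c : V → ℕ) (g : ℕ → ℕ)
    (hg : Function.Injective g) (h : IsBColoring G c) : IsBColoring G (g ∘ c) := by
  obtain ⟨hp, hb⟩ := h
  refine ⟨fun u v huv e => hp u v huv (hg e), ?_⟩
  rintro j ⟨v, rfl⟩
  obtain ⟨w, hw, hwb⟩ := hb (c v) ⟨v, rfl⟩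
  refine ⟨w, by simp [hw], ?_⟩
  rintro j' ⟨u, rfl⟩ hne
  obtain ⟨x, hx, hxc⟩ := hwb (c u) ⟨u, rfl⟩ (fun e => hne (congrArg g e))
  exact ⟨x, hx, congrArg g hxc⟩

lemma numColors_comp {V : Type*} (c : V → ℕ) (g : ℕ → ℕ) (hg : Function.Injective g) :
    numColors (g ∘ c) = numColors c := by
  unfold numColors
  rw [Set.range_comp, Set.ncard_image_of_injective _ hg]

lemma combine {V ι : Type} [Fintype V] [Fintype ι]
    (G : SimpleGraph V) (parts : V → ι)
    (hjoin : ∀ u v, parts u ≠ parts v → G.Adj u v)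
    (c : V → ℕ)
    (hcross : ∀ u v, parts u ≠ parts v → c u ≠ c v)
    (hb : ∀ i, IsBColoring (G.induce {v | parts v = i}) (fun v => c v.1)) :
    IsBColoring G c ∧
      numColors c = ∑ i, numColors (fun v : {v : V | parts v = i} => c v.1) := by
  constructor
  · constructor
    · intro u v huv hc
      by_cases h : parts u = parts v
      · exact (hb (parts u)).1 ⟨u, rfl⟩ ⟨v, h.symm⟩ (by simpa using huv) hc
      · exact hcross u v h hc
    · rintro j ⟨v, rfl⟩
      obtain ⟨w, hw, hwb⟩ := (hb (parts v)).2 (c v) ⟨⟨v, rfl⟩, rfl⟩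
      refine ⟨w.1, hw, ?_⟩
      rintro j' ⟨u, rfl⟩ hne
      by_cases h : parts u = parts w.1
      · have hu : u ∈ {x | parts x = parts v} := by
          simp only [Set.mem_setOf_eq, h]; exact w.2
        obtain ⟨x, hx, hxc⟩ := hwb (c u) ⟨⟨u, hu⟩, rfl⟩ hne
        exact ⟨x.1, by simpa using hx, hxc⟩
      · exact ⟨u, (hjoin u w.1 h).symm, rfl⟩
  · unfold numColors
    have hrange : Set.range c = ⋃ i, c '' {v | parts v = i} := by
      ext j
      constructor
      · rintro ⟨v, rfl⟩
        exact Set.mem_iUnion.mpr ⟨parts v, ⟨v, rfl, rfl⟩⟩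
      · intro hj
        simp only [Set.mem_iUnion] at hj
        obtain ⟨i, v, _, rfl⟩ := hj
        exact ⟨v, rfl⟩
    have hdisj : ∀ i j : ι, i ≠ j → Disjoint (c '' {v | parts v = i}) (c '' {v | parts v = j}) := by
      intro i j hij
      rw [Set.disjoint_left]
      rintro k ⟨u, hu, rfl⟩ ⟨v, hv, hvc⟩
      simp only [Set.mem_setOf_eq] at hu hv
      exact hcross v u (by rw [hu, hv]; exact hij.symm) hvc
    rw [hrange, my_ncard_iUnion _ (fun i => ((Set.toFinite _).image c)) hdisj]
    refine Finset.sum_congr rfl fun i _ => ?_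
    rw [Set.image_eq_range]

theorem stmt18 {V ι : Type} [Fintype V] [Fintype ι]
    (G : SimpleGraph V) (parts : V → ι)
    (hjoin : ∀ u v, parts u ≠ parts v → G.Adj u v) :
    -- combining b-colourings of the parts with pairwise disjoint colour sets
    -- yields a b-colouring of the join with `∑ i, m i` colours:
    (∀ (m : ι → ℕ) (c : V → ℕ),
      (∀ u v, parts u ≠ parts v → c u ≠ c v) →
      (∀ i : ι,
        IsBColoring (G.induce {v | parts v = i}) (fun v => c v.1) ∧
        numColors (fun v : {v : V | parts v = i} => c v.1) = m i ∧
        (∀ v : {v : V | parts v = i},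
          IsBVertex (G.induce {v | parts v = i}) (fun w => c w.1) v ↔
            ∀ w : {v : V | parts v = i},
              ((G.induce {v | parts v = i}).neighborSet w).ncard ≤
                ((G.induce {v | parts v = i}).neighborSet v).ncard)) →
      IsBColoring G c ∧ numColors c = ∑ i : ι, m i) ∧
    -- in particular, if each part is tight with a tight b-colouring and `G` is
    -- tight with dense set the union of the dense sets of the parts, then `G`
    -- has a tight b-colouring:
    (IsTight G →
      (∀ i : ι, IsTight (G.induce {v | parts v = i})) →
      (∀ v : V, v ∈ denseSet G ↔
        (⟨v, rfl⟩ : {w : V | parts w = parts v}) ∈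
          denseSet (G.induce {w | parts w = parts v})) →
      (∀ i : ι, ∃ ci : {v : V | parts v = i} → ℕ,
        IsBColoring (G.induce {v | parts v = i}) ci ∧
        numColors ci = mDegree (G.induce {v | parts v = i})) →
      ∃ c : V → ℕ, IsBColoring G c ∧ numColors c = mDegree G) := by
  constructor
  · intro m c hcross h
    obtain ⟨hb, hsum⟩ := combine G parts hjoin c hcross (fun i => (h i).1)
    exact ⟨hb, hsum.trans (Finset.sum_congr rfl fun i _ => (h i).2.1)⟩
  · intro hG hparts hdense hex
    classical
    choose ci hci hcnum using hex
    set e : ι → ℕ := fun i => (Fintype.equivFin ι i : ℕ) with he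
    set c : V → ℕ := fun v => Nat.pair (e (parts v)) (ci (parts v) ⟨v, rfl⟩) with hc
    have hpair : ∀ k : ℕ, Function.Injective (fun n => Nat.pair k n) :=
      fun k a b hab => (Nat.pair_eq_pair.mp hab).2
    have hrestr : ∀ (i : ι) (v : {w : V | parts w = i}),
        c v.1 = Nat.pair (e i) (ci i v) := by
      rintro i ⟨v, hv⟩
      simp only [Set.mem_setOf_eq] at hv
      subst hv
      rfl
    have hcrossc : ∀ u v, parts u ≠ parts v → c u ≠ c v := by
      intro u v h hcv
      rw [hc] at hcv
      exact h ((Fintype.equivFin ι).injective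
        (Fin.val_injective (Nat.pair_eq_pair.mp hcv).1))
    have hfun : ∀ i : ι, (fun v : {w : V | parts w = i} => c v.1)
        = (fun n => Nat.pair (e i) n) ∘ ci i := fun i => funext (hrestr i)
    have hbi : ∀ i, IsBColoring (G.induce {v | parts v = i}) (fun v => c v.1) := by
      intro i
      rw [hfun i]
      exact isBColoring_comp _ _ _ (hpair (e i)) (hci i)
    obtain ⟨hbc, hsum⟩ := combine G parts hjoin c hcrossc hbi
    have hnum : ∀ i : ι, numColors (fun v : {w : V | parts w = i} => c v.1)
        = mDegree (G.induce {v | parts v = i}) := by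
      intro i
      rw [hfun i, numColors_comp _ _ (hpair (e i))]
      exact hcnum i
    -- mDegree G = ∑ i, mDegree of part i, via dense set counting
    have hkey : mDegree G = ∑ i, mDegree (G.induce {v | parts v = i}) := by
      set D : ι → Set V :=
        fun i => Subtype.val '' denseSet (G.induce {v | parts v = i}) with hD
      have hcover : denseSet G = ⋃ i, D i := by
        ext v
        constructor
        · intro hv
          exact Set.mem_iUnion.mpr ⟨parts v, ⟨⟨v, rfl⟩, (hdense v).mp hv, rfl⟩⟩
        · intro hv
          obtain ⟨i, hi⟩ := Set.mem_iUnion.mp hv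
          obtain ⟨⟨w, hw⟩, hwd, rfl⟩ := hi
          simp only [Set.mem_setOf_eq] at hw
          subst hw
          exact (hdense w).mpr hwd
      have hdisj : ∀ i j : ι, i ≠ j → Disjoint (D i) (D j) := by
        intro i j hij
        rw [Set.disjoint_left]
        rintro v ⟨⟨w1, h1⟩, _, rfl⟩ ⟨⟨w2, h2⟩, _, h2e⟩
        simp only [Set.mem_setOf_eq] at h1 h2
        have : w2 = w1 := h2e
        exact hij (h1 ▸ (this ▸ h2 : parts w1 = j))
      have := hG.1
      rw [hcover, my_ncard_iUnion _ (fun i => Set.toFinite _) hdisj] at this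
      rw [← this]
      refine Finset.sum_congr rfl fun i _ => ?_
      rw [hD]
      rw [Set.ncard_image_of_injective _ Subtype.val_injective]
      exact (hparts i).1
    refine ⟨c, hbc, ?_⟩
    rw [hsum, hkey]
    exact Finset.sum_congr rfl fun i _ => hnum i
end
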